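/- arXiv:2302.11067 — 2 statements merged into one kernel-verified Lean document; each statement's English description precedes it below -/
import Mathlib

section
/- Let R(N, ℓ, x) count recursive trees on vertices labeled 0,…,N−1, rooted at 0, with ℓ vertices of degree 1 and smallest rooted path ending at x. Then for N > 2, R(N, ℓ, x) = Σ_{i=max(x,2)}^{N−2} R(N−1, ℓ−1, i) + Σ_{i=1}^{max(x−1,1)} R(N−1, ℓ, i). -/
/-- A recursive tree on `N` vertices `0,…,N-1`, encoded by its parent function:
the parent of every nonroot vertex has a smaller label (and `f 0 = 0`). -/
def IsRecTree (N : ℕ) (f : Fin N → Fin N) : Prop :=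
  ∀ v : Fin N, ((v : ℕ) = 0 → f v = v) ∧ ((v : ℕ) ≠ 0 → (f v : ℕ) < (v : ℕ))

/-- The number of children of vertex `v`. -/
def childCount (N : ℕ) (f : Fin N → Fin N) (v : Fin N) : ℕ :=
  (Finset.univ.filter fun u : Fin N => (u : ℕ) ≠ 0 ∧ f u = v).card

/-- A leaf is a vertex of degree 1 in the underlying undirected tree:
a nonroot vertex with no children, or the root with exactly one child. -/
def IsLeaf (N : ℕ) (f : Fin N → Fin N) (v : Fin N) : Prop :=
  if (v : ℕ) = 0 then childCount N f v = 1 else childCount N f v = 0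

/-- The number of leaves (vertices of degree 1, possibly including the root). -/
noncomputable def leafCount (N : ℕ) (f : Fin N → Fin N) : ℕ :=
  Set.ncard { v : Fin N | IsLeaf N f v }

/-- The smallest rooted path (starting at the root and always descending to the
smallest-labeled child, until a childless vertex) ends at the vertex labeled `x`. -/
def SmallestPathEndsAt (N : ℕ) (f : Fin N → Fin N) (x : ℕ) : Prop :=
  ∃ (m : ℕ) (c : ℕ → Fin N), (c 0 : ℕ) = 0 ∧ (c m : ℕ) = x ∧
    (∀ i, i < m → (c (i + 1) : ℕ) ≠ 0 ∧ f (c (i + 1)) = c i ∧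
      ∀ w : Fin N, (w : ℕ) ≠ 0 → f w = c i → c (i + 1) ≤ w) ∧
    childCount N f (c m) = 0

/-- `R N ℓ x`: the number of recursive trees on `N` vertices with `ℓ` leaves
whose smallest rooted path ends at `x`. -/
noncomputable def R (N ℓ x : ℕ) : ℕ :=
  Set.ncard { f : Fin N → Fin N |
    IsRecTree N f ∧ leafCount N f = ℓ ∧ SmallestPathEndsAt N f x }


/-!
If the smallest rooted path of a recursive tree `f` on `N` vertices ends at `x`, then `x` is a
leaf; deleting it and lowering the labels above `x` by one gives a recursive tree `g` on `N - 1`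
vertices. The parent of `x` can be read off from `g`: it is the last vertex of the smallest
rooted path of `g` with label below `x` (the graft point), and conversely attaching a new leaf
`x` to the graft point of any `g` makes the smallest rooted path end at `x`. Hence `R(N, ℓ, x)`
counts trees `g`, where `f` has one leaf more than `g` unless the graft point was a leaf of `g`.

For `x ≥ 2` the graft point is a leaf of `g` exactly when the smallest rooted path of `g` ends
below `x` (it is then the endpoint), which splits the count into the two sums. For `x = 1` the
graft point is the root, a leaf when it has a single child. Exchanging the labels `0` and `1` of
the underlying undirected tree preserves leaves and turns "the root has a single child" into
"vertex `1` is childless", i.e. "the smallest rooted path ends at `1`".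
-/

open Finset

variable {n : ℕ}

lemma Set.ncard_sep_mem_eq_sum {α β : Type*} [Finite α] (s : Set α) (e : α → β)
    (t : Finset β) : {a ∈ s | e a ∈ t}.ncard = ∑ i ∈ t, {a ∈ s | e a = i}.ncard := by
  classical
  induction t using Finset.induction_on with
  | empty => simp
  | insert i t hi ih =>
    rw [sum_insert hi, ← ih, ← Set.ncard_union_eq ?_ (Set.toFinite _) (Set.toFinite _)]
    · congr 1
      ext a
      simp only [Set.mem_ofPred_eq, Set.mem_union, Finset.mem_insert]
      tauto
    · rw [Set.disjoint_left]
      rintro a ⟨-, rfl⟩ ⟨-, ha⟩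
      exact hi ha

lemma Set.ncard_sep_eq_of_involution {α : Type*} {s : Set α} {P Q : α → Prop} (τ : α → α)
    (hτ : ∀ a ∈ s, τ a ∈ s) (hττ : ∀ a ∈ s, τ (τ a) = a) (hPQ : ∀ a ∈ s, Q (τ a) ↔ P a) :
    {a ∈ s | P a}.ncard = {a ∈ s | Q a}.ncard :=
  Set.ncard_congr (fun a _ => τ a) (fun a ⟨ha, hP⟩ => ⟨hτ a ha, (hPQ a ha).2 hP⟩)
    (fun a b ⟨ha, _⟩ ⟨hb, _⟩ h => by rw [← hττ a ha, ← hττ b hb, h])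
    (fun b ⟨hb, hQ⟩ => ⟨τ b, ⟨hτ b hb, (hPQ _ (hτ b hb)).1 (by rwa [hττ b hb])⟩, hττ b hb⟩)

lemma Fin.predAbove_succ_succAbove (p v : Fin n) : p.predAbove (p.succ.succAbove v) = v :=
  p.succ.succAbove_right_injective (Fin.succ_succAbove_predAbove (Fin.succAbove_ne _ _))

lemma Fin.succ_succAbove_lt_succ_iff (p v : Fin n) : p.succ.succAbove v < p.succ ↔ v ≤ p := by
  rw [Fin.succAbove_lt_iff_castSucc_lt, Fin.castSucc_lt_succ_iff]

lemma Fin.succ_lt_succ_succAbove_iff (p v : Fin n) : p.succ < p.succ.succAbove v ↔ p < v := by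
  rw [Fin.lt_succAbove_iff_le_castSucc, Fin.succ_le_castSucc_iff]

lemma Fin.val_succ_succAbove_eq_zero [NeZero n] (p v : Fin n) :
    (p.succ.succAbove v : ℕ) = 0 ↔ (v : ℕ) = 0 := by
  simp [Fin.val_eq_zero_iff, Fin.succAbove_eq_zero_iff (Fin.succ_ne_zero p)]

def children (f : Fin n → Fin n) (v : Fin n) : Finset (Fin n) :=
  univ.filter fun u => (u : ℕ) ≠ 0 ∧ f u = v

lemma mem_children {f : Fin n → Fin n} {u v : Fin n} :
    u ∈ children f v ↔ (u : ℕ) ≠ 0 ∧ f u = v := by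
  simp [children]

lemma childCount_eq_card (f : Fin n → Fin n) (v : Fin n) :
    childCount n f v = #(children f v) := rfl

lemma children_eq_empty_of_forall_ne {f : Fin n → Fin n} {x : Fin n} (hx : ∀ w, f w ≠ x) :
    children f x = ∅ :=
  eq_empty_of_forall_notMem fun _ hu => hx _ (mem_children.1 hu).2

instance (f : Fin n → Fin n) : DecidablePred (IsLeaf n f) := fun v => by
  unfold IsLeaf; infer_instance

lemma leafCount_eq_sum (f : Fin n → Fin n) :
    leafCount n f = ∑ v, if IsLeaf n f v then 1 else 0 := by
  rw [leafCount, Set.ncard_eq_toFinset_card', Set.toFinset_ofPred, card_filter]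

section RecTree

variable {f : Fin n → Fin n} (hf : IsRecTree n f)
include hf

lemma lt_of_mem_children {u v : Fin n} (hu : u ∈ children f v) : v < u := by
  obtain ⟨hu0, rfl⟩ := mem_children.1 hu
  exact (hf u).2 hu0

lemma mem_children_of_val_eq_one {u v : Fin n} (hu : (u : ℕ) = 1) (hv : (v : ℕ) = 0) :
    u ∈ children f v := by
  refine mem_children.2 ⟨by omega, Fin.ext ?_⟩
  have := (hf u).2 (by omega)
  omega

lemma childCount_ne_zero_of_val_eq_zero (hn : 1 < n) {v : Fin n} (hv : (v : ℕ) = 0) :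
    childCount n f v ≠ 0 := by
  rw [childCount_eq_card, ← pos_iff_ne_zero, card_pos]
  exact ⟨⟨1, hn⟩, mem_children_of_val_eq_one hf rfl hv⟩

lemma apply_ne_of_children_eq_empty {v : Fin n} (hv : children f v = ∅) (hv0 : (v : ℕ) ≠ 0)
    (w : Fin n) : f w ≠ v := by
  intro hw
  by_cases hw0 : (w : ℕ) = 0
  · rw [(hf w).1 hw0] at hw
    exact hv0 (hw ▸ hw0)
  · exact notMem_empty w (hv ▸ mem_children.2 ⟨hw0, hw⟩)

end RecTree

def descend (f : Fin n → Fin n) (v : Fin n) : Fin n :=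
  if h : (children f v).Nonempty then (children f v).min' h else v

section Descend

variable {f : Fin n → Fin n} {u v : Fin n}

lemma descend_mem_children (h : (children f v).Nonempty) : descend f v ∈ children f v := by
  rw [descend, dif_pos h]
  exact min'_mem _ h

lemma descend_le (hu : u ∈ children f v) : descend f v ≤ u := by
  rw [descend, dif_pos ⟨u, hu⟩]
  exact min'_le _ _ hu

lemma descend_of_children_eq_empty (h : children f v = ∅) : descend f v = v := by
  rw [descend, dif_neg (by simp [h])]

lemma descend_eq_of_mem_of_forall_le (hu : u ∈ children f v)
    (hmin : ∀ w ∈ children f v, u ≤ w) : descend f v = u :=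
  le_antisymm (descend_le hu) (hmin _ (descend_mem_children ⟨u, hu⟩))

variable (hf : IsRecTree n f)
include hf

lemma le_descend (v : Fin n) : v ≤ descend f v := by
  by_cases h : (children f v).Nonempty
  · exact (lt_of_mem_children hf (descend_mem_children h)).le
  · rw [descend_of_children_eq_empty (not_nonempty_iff_eq_empty.1 h)]

lemma descend_eq_self_iff : descend f v = v ↔ children f v = ∅ := by
  refine ⟨fun h => ?_, descend_of_children_eq_empty⟩
  by_contra hne
  exact (lt_of_mem_children hf (descend_mem_children (nonempty_iff_ne_empty.2 hne))).ne' h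

end Descend

section Path

variable [NeZero n] {f : Fin n → Fin n}

def path (f : Fin n → Fin n) (k : ℕ) : Fin n := (descend f)^[k] 0

/-- After `n` steps the smallest rooted path has certainly stopped (`descend_endpoint`). -/
def endpoint (f : Fin n → Fin n) : Fin n := path f n

@[simp] lemma path_zero : path f 0 = 0 := rfl

lemma path_succ (k : ℕ) : path f (k + 1) = descend f (path f k) :=
  Function.iterate_succ_apply' _ _ _

lemma path_eq_of_le {k j : ℕ} (hk : descend f (path f k) = path f k) (hkj : k ≤ j) :
    path f j = path f k := by
  obtain ⟨j, rfl⟩ := Nat.exists_eq_add_of_le hkj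
  rw [path, add_comm, Function.iterate_add_apply]
  exact Function.iterate_fixed hk j

variable (hf : IsRecTree n f)
include hf

lemma path_mono : Monotone (path f) :=
  monotone_nat_of_le_succ fun k => by rw [path_succ]; exact le_descend hf _

lemma descend_endpoint : descend f (endpoint f) = endpoint f := by
  by_contra hne
  have hmoves : ∀ k ≤ n, descend f (path f k) ≠ path f k := fun k hk hk' =>
    hne (by rw [endpoint, path_eq_of_le hk' hk, hk'])
  have hgrow : ∀ k ≤ n, k ≤ (path f k : ℕ) := by
    intro k hk
    induction k with
    | zero => exact Nat.zero_le _
    | succ k ih =>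
      have hlt : path f k < path f (k + 1) := by
        rw [path_succ]
        exact lt_of_le_of_ne (le_descend hf _) (hmoves k (by omega)).symm
      exact Nat.succ_le_of_lt (lt_of_le_of_lt (ih (by omega)) hlt)
  exact absurd (hgrow n le_rfl) (not_le.2 (path f n).isLt)

lemma children_endpoint : children f (endpoint f) = ∅ :=
  (descend_eq_self_iff hf).1 (descend_endpoint hf)

lemma endpoint_eq_of_path_eq {k : ℕ} {v : Fin n} (hk : path f k = v) (hv : children f v = ∅) :
    endpoint f = v := by
  have hfix : descend f (path f k) = path f k := by
    rw [hk]
    exact descend_of_children_eq_empty hv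
  rw [← hk, ← path_eq_of_le hfix (le_max_left k n)]
  exact (path_eq_of_le (descend_endpoint hf) (le_max_right k n)).symm

lemma smallestPathEndsAt_iff {x : ℕ} : SmallestPathEndsAt n f x ↔ (endpoint f : ℕ) = x := by
  constructor
  · rintro ⟨m, c, hc0, hcm, hstep, hleaf⟩
    have hpath : ∀ k ≤ m, path f k = c k := by
      intro k hk
      induction k with
      | zero => exact Fin.ext (by simp [hc0])
      | succ k ih =>
        obtain ⟨hne, hpar, hmin⟩ := hstep k (by omega)
        rw [path_succ, ih (by omega)]
        exact descend_eq_of_mem_of_forall_le (mem_children.2 ⟨hne, hpar⟩)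
          fun w hw => hmin w (mem_children.1 hw).1 (mem_children.1 hw).2
    rw [endpoint_eq_of_path_eq hf (hpath m le_rfl) (card_eq_zero.1 hleaf), hcm]
  · intro hx
    have hex : ∃ k, children f (path f k) = ∅ := ⟨n, children_endpoint hf⟩
    refine ⟨Nat.find hex, path f, rfl, ?_, fun k hk => ?_, card_eq_zero.2 (Nat.find_spec hex)⟩
    · rw [← endpoint_eq_of_path_eq hf rfl (Nat.find_spec hex), hx]
    · have hne : (children f (path f k)).Nonempty :=
        nonempty_iff_ne_empty.2 (Nat.find_min hex hk)
      obtain ⟨h0, hpar⟩ := mem_children.1 (descend_mem_children hne)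
      rw [path_succ]
      exact ⟨h0, hpar, fun w hw0 hw => descend_le (mem_children.2 ⟨hw0, hw⟩)⟩

lemma endpoint_ne_zero (hn : 1 < n) : (endpoint f : ℕ) ≠ 0 := fun h =>
  childCount_ne_zero_of_val_eq_zero hf hn h (card_eq_zero.2 (children_endpoint hf))

lemma leafCount_pos (hn : 1 < n) : 0 < leafCount n f := by
  refine (Set.ncard_pos (Set.toFinite _)).2 ⟨endpoint f, ?_⟩
  rw [Set.mem_ofPred_eq, IsLeaf, if_neg (endpoint_ne_zero hf hn)]
  exact card_eq_zero.2 (children_endpoint hf)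

end Path

lemma endpoint_eq_one_iff {m : ℕ} {g : Fin (m + 2) → Fin (m + 2)} (hg : IsRecTree (m + 2) g) :
    (endpoint g : ℕ) = 1 ↔ childCount (m + 2) g 1 = 0 := by
  have hpath : path g 1 = 1 := by
    rw [path_succ, path_zero]
    refine descend_eq_of_mem_of_forall_le
      (mem_children_of_val_eq_one hg (Fin.val_one m) (Fin.val_zero _)) fun w hw => ?_
    rw [Fin.le_def, Fin.val_one]
    exact Nat.one_le_iff_ne_zero.2 (mem_children.1 hw).1
  rw [childCount_eq_card, card_eq_zero]
  refine ⟨fun h => ?_, fun h => by rw [endpoint_eq_of_path_eq hg hpath h, Fin.val_one]⟩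
  rw [← children_endpoint hg, show endpoint g = 1 from Fin.ext (h.trans (Fin.val_one m).symm)]

section Graft

variable [NeZero n] {g : Fin n → Fin n} {p a : Fin n}

/-- The vertex to which the new leaf `p.succ` must be attached for the smallest rooted path to
end there: the last vertex of the smallest rooted path of `g` with label at most `p`. -/
def IsGraftPoint (g : Fin n → Fin n) (p a : Fin n) : Prop :=
  (∃ k, path g k = a) ∧ a ≤ p ∧ ∀ u ∈ children g a, p < u

lemma IsGraftPoint.path_eq_of_path_le (hg : IsRecTree n g) {k j : ℕ}
    (hk : IsGraftPoint g p (path g k)) (hj : path g j ≤ p) (hkj : k ≤ j) :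
    path g j = path g k := by
  by_cases hfix : descend g (path g k) = path g k
  · exact path_eq_of_le hfix hkj
  rcases hkj.eq_or_lt with rfl | hlt
  · rfl
  have hne := nonempty_iff_ne_empty.2 (mt (descend_eq_self_iff hg).2 hfix)
  have hsucc : p < path g (k + 1) := by
    rw [path_succ]
    exact hk.2.2 _ (descend_mem_children hne)
  exact absurd (hsucc.trans_le ((path_mono hg hlt).trans hj)) (lt_irrefl _)

lemma IsGraftPoint.unique (hg : IsRecTree n g) {b : Fin n} (ha : IsGraftPoint g p a)
    (hb : IsGraftPoint g p b) : a = b := by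
  obtain ⟨⟨k, rfl⟩, -⟩ := id ha
  obtain ⟨⟨j, rfl⟩, -⟩ := id hb
  rcases le_total k j with hkj | hjk
  · exact (ha.path_eq_of_path_le hg hb.2.1 hkj).symm
  · exact hb.path_eq_of_path_le hg ha.2.1 hjk

lemma exists_isGraftPoint (hg : IsRecTree n g) (p : Fin n) : ∃ a, IsGraftPoint g p a := by
  by_cases he : endpoint g ≤ p
  · exact ⟨endpoint g, ⟨n, rfl⟩, he, by simp [children_endpoint hg]⟩
  have hex : ∃ k, p < path g k := ⟨n, not_le.1 he⟩
  have hk0 : Nat.find hex ≠ 0 := fun h => by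
    simpa [h] using Nat.find_spec hex
  obtain ⟨k, hk⟩ := Nat.exists_eq_succ_of_ne_zero hk0
  have hle : path g k ≤ p := not_lt.1 (Nat.find_min hex (by omega))
  have hstep : p < descend g (path g k) := by
    rw [← path_succ, show k + 1 = Nat.find hex from hk.symm]
    exact Nat.find_spec hex
  exact ⟨path g k, ⟨k, rfl⟩, hle, fun u hu => hstep.trans_le (descend_le hu)⟩

noncomputable def graftPoint (g : Fin n → Fin n) (p : Fin n) : Fin n :=
  Classical.epsilon (IsGraftPoint g p)

lemma isGraftPoint_graftPoint (hg : IsRecTree n g) (p : Fin n) :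
    IsGraftPoint g p (graftPoint g p) :=
  Classical.epsilon_spec (exists_isGraftPoint hg p)

lemma graftPoint_eq (hg : IsRecTree n g) (ha : IsGraftPoint g p a) : graftPoint g p = a :=
  (isGraftPoint_graftPoint hg p).unique hg ha

variable (hn : 1 < n)
include hn

lemma isLeaf_graftPoint_iff (hg : IsRecTree n g) (hp : (p : ℕ) ≠ 0) :
    IsLeaf n g (graftPoint g p) ↔ endpoint g ≤ p := by
  obtain ⟨⟨k, hk⟩, hle, hgt⟩ := isGraftPoint_graftPoint hg p
  have ha0 : (graftPoint g p : ℕ) ≠ 0 := fun h0 =>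
    hp (Nat.lt_one_iff.1 (hgt ⟨1, hn⟩ (mem_children_of_val_eq_one hg rfl h0)))
  rw [IsLeaf, if_neg ha0, childCount_eq_card, card_eq_zero]
  constructor
  · intro h
    rwa [endpoint_eq_of_path_eq hg hk h]
  · intro he
    have he' : IsGraftPoint g p (endpoint g) := ⟨⟨n, rfl⟩, he, by simp [children_endpoint hg]⟩
    rw [graftPoint_eq hg he']
    exact children_endpoint hg

end Graft

section Deletion

variable (p : Fin n)

def eraseLeaf (f : Fin (n + 1) → Fin (n + 1)) : Fin n → Fin n :=
  fun v => p.predAbove (f (p.succ.succAbove v))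

def addLeaf (g : Fin n → Fin n) (a : Fin n) : Fin (n + 1) → Fin (n + 1) :=
  Fin.insertNth p.succ (p.succ.succAbove a) fun v => p.succ.succAbove (g v)

variable {p} {f : Fin (n + 1) → Fin (n + 1)} {g : Fin n → Fin n} {a : Fin n}

@[simp] lemma addLeaf_apply_same : addLeaf p g a p.succ = p.succ.succAbove a :=
  Fin.insertNth_apply_same _ _ _

@[simp] lemma addLeaf_apply_succAbove (v : Fin n) :
    addLeaf p g a (p.succ.succAbove v) = p.succ.succAbove (g v) :=
  Fin.insertNth_apply_succAbove _ _ _ _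

lemma addLeaf_ne (w : Fin (n + 1)) : addLeaf p g a w ≠ p.succ := by
  obtain rfl | ⟨v, rfl⟩ := Fin.eq_self_or_eq_succAbove p.succ w <;> simp [Fin.succAbove_ne]

lemma eraseLeaf_addLeaf : eraseLeaf p (addLeaf p g a) = g := by
  funext v
  simp [eraseLeaf, Fin.predAbove_succ_succAbove]

lemma addLeaf_eraseLeaf (hx : ∀ w, f w ≠ p.succ) :
    addLeaf p (eraseLeaf p f) (p.predAbove (f p.succ)) = f := by
  funext w
  obtain rfl | ⟨v, rfl⟩ := Fin.eq_self_or_eq_succAbove p.succ w <;>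
    simp [eraseLeaf, Fin.succ_succAbove_predAbove (hx _)]

lemma isLeaf_succ (hx : ∀ w, f w ≠ p.succ) : IsLeaf (n + 1) f p.succ := by
  rw [IsLeaf, if_neg (show (p.succ : ℕ) ≠ 0 from Nat.succ_ne_zero p), childCount_eq_card,
    children_eq_empty_of_forall_ne hx, card_empty]

lemma predAbove_apply_succ_le (hf : IsRecTree (n + 1) f) (hx : ∀ w, f w ≠ p.succ) :
    p.predAbove (f p.succ) ≤ p := by
  rw [← Fin.succ_succAbove_lt_succ_iff, Fin.succ_succAbove_predAbove (hx _)]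
  exact (hf p.succ).2 (Nat.succ_ne_zero p)

variable [NeZero n]

lemma isRecTree_addLeaf (hg : IsRecTree n g) (ha : a ≤ p) :
    IsRecTree (n + 1) (addLeaf p g a) := by
  intro w
  obtain rfl | ⟨v, rfl⟩ := Fin.eq_self_or_eq_succAbove p.succ w
  · refine ⟨fun h => absurd h (Nat.succ_ne_zero p), fun _ => ?_⟩
    rw [addLeaf_apply_same]
    exact (Fin.succ_succAbove_lt_succ_iff p a).2 ha
  · simp only [addLeaf_apply_succAbove, ne_eq, Fin.val_succ_succAbove_eq_zero]
    refine ⟨fun h => by rw [(hg v).1 h], fun h => ?_⟩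
    exact Fin.strictMono_succAbove _ ((hg v).2 h)

variable (hx : ∀ w, f w ≠ p.succ)
include hx

lemma isRecTree_eraseLeaf (hf : IsRecTree (n + 1) f) : IsRecTree n (eraseLeaf p f) := by
  intro v
  have hv := hf (p.succ.succAbove v)
  simp only [ne_eq, Fin.val_succ_succAbove_eq_zero] at hv
  refine ⟨fun h => by rw [eraseLeaf, hv.1 h, Fin.predAbove_succ_succAbove], fun h => ?_⟩
  have hlt := hv.2 h
  rw [← Fin.succ_succAbove_predAbove (hx (p.succ.succAbove v))] at hlt
  exact (Fin.strictMono_succAbove _).lt_iff_lt.1 hlt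

lemma mem_children_eraseLeaf {u v : Fin n} :
    u ∈ children (eraseLeaf p f) v ↔ p.succ.succAbove u ∈ children f (p.succ.succAbove v) := by
  simp only [mem_children, ne_eq, Fin.val_succ_succAbove_eq_zero, eraseLeaf]
  refine and_congr_right fun _ => ⟨fun h => ?_, fun h => by rw [h, Fin.predAbove_succ_succAbove]⟩
  rw [← h, Fin.succ_succAbove_predAbove (hx _)]

lemma childCount_succAbove (v : Fin n) :
    childCount (n + 1) f (p.succ.succAbove v) =
      childCount n (eraseLeaf p f) v + if v = p.predAbove (f p.succ) then 1 else 0 := by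
  simp only [childCount_eq_card, children, card_filter]
  rw [Fin.sum_univ_succAbove _ p.succ, add_comm]
  congr 1
  · refine sum_congr rfl fun u _ => if_congr ?_ rfl rfl
    exact mem_children.symm.trans ((mem_children_eraseLeaf hx).symm.trans mem_children)
  · simp only [show (p.succ : ℕ) ≠ 0 from Nat.succ_ne_zero p, ne_eq, not_false_eq_true, true_and]
    refine if_congr ?_ rfl rfl
    rw [← Fin.succ_succAbove_predAbove (hx p.succ), Fin.succAbove_right_inj,
      Fin.predAbove_succ_succAbove, eq_comm]

lemma descend_eraseLeaf {v : Fin n} (hv : descend f (p.succ.succAbove v) ≠ p.succ) :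
    p.succ.succAbove (descend (eraseLeaf p f) v) = descend f (p.succ.succAbove v) := by
  by_cases hne : (children f (p.succ.succAbove v)).Nonempty
  · obtain ⟨u, hu⟩ := Fin.exists_succAbove_eq hv
    have hmem : u ∈ children (eraseLeaf p f) v := by
      rw [mem_children_eraseLeaf hx, hu]
      exact descend_mem_children hne
    rw [descend_eq_of_mem_of_forall_le hmem fun w hw => ?_, hu]
    rw [← Fin.succAbove_le_succAbove_iff, hu]
    exact descend_le ((mem_children_eraseLeaf hx).1 hw)
  · have hempty := not_nonempty_iff_eq_empty.1 hne
    have hempty' : children (eraseLeaf p f) v = ∅ :=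
      eq_empty_of_forall_notMem fun u hu => by
        simpa [hempty] using (mem_children_eraseLeaf hx).1 hu
    rw [descend_of_children_eq_empty hempty, descend_of_children_eq_empty hempty']

lemma descend_succAbove_eq_succ_iff {b : Fin n} :
    descend f (p.succ.succAbove b) = p.succ ↔
      f p.succ = p.succ.succAbove b ∧ ∀ u ∈ children (eraseLeaf p f) b, p < u := by
  constructor
  · intro hd
    have hne : (children f (p.succ.succAbove b)).Nonempty := nonempty_iff_ne_empty.2 fun h => by
      rw [descend_of_children_eq_empty h] at hd
      exact Fin.succAbove_ne _ _ hd
    have hxb := descend_mem_children hne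
    rw [hd] at hxb
    refine ⟨(mem_children.1 hxb).2, fun u hu => ?_⟩
    rw [← Fin.succ_lt_succ_succAbove_iff]
    refine lt_of_le_of_ne ?_ (Fin.succAbove_ne _ _).symm
    calc p.succ = descend f (p.succ.succAbove b) := hd.symm
      _ ≤ _ := descend_le ((mem_children_eraseLeaf hx).1 hu)
  · rintro ⟨hfb, hgt⟩
    refine descend_eq_of_mem_of_forall_le (mem_children.2 ⟨Nat.succ_ne_zero p, hfb⟩) fun w hw => ?_
    obtain rfl | ⟨u, rfl⟩ := Fin.eq_self_or_eq_succAbove p.succ w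
    · exact le_rfl
    · exact ((Fin.succ_lt_succ_succAbove_iff p u).2 (hgt u ((mem_children_eraseLeaf hx).2 hw))).le

lemma path_eraseLeaf (k : ℕ) :
    path f k = p.succ ∨ path f k = p.succ.succAbove (path (eraseLeaf p f) k) := by
  induction k with
  | zero => exact Or.inr (Fin.succAbove_ne_zero_zero (Fin.succ_ne_zero p)).symm
  | succ k ih =>
    rw [path_succ, path_succ]
    rcases ih with h | h
    · rw [h, descend_of_children_eq_empty (children_eq_empty_of_forall_ne hx)]
      exact Or.inl rfl
    · rw [h]
      by_cases hd : descend f (p.succ.succAbove (path (eraseLeaf p f) k)) = p.succ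
      · exact Or.inl hd
      · exact Or.inr (descend_eraseLeaf hx hd).symm

variable (hf : IsRecTree (n + 1) f)
include hf

lemma endpoint_eq_succ_iff :
    endpoint f = p.succ ↔ IsGraftPoint (eraseLeaf p f) p (p.predAbove (f p.succ)) := by
  have hfa : p.succ.succAbove (p.predAbove (f p.succ)) = f p.succ :=
    Fin.succ_succAbove_predAbove (hx _)
  constructor
  · intro he
    obtain ⟨k, hk, hk1⟩ : ∃ k, path f k ≠ p.succ ∧ path f (k + 1) = p.succ := by
      by_contra! h
      have hne : ∀ k, path f k ≠ p.succ := fun k => by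
        induction k with
        | zero => exact (Fin.succ_ne_zero p).symm
        | succ k ih => exact h k ih
      exact hne (n + 1) he
    rw [path_succ, (path_eraseLeaf hx k).resolve_left hk,
      descend_succAbove_eq_succ_iff hx] at hk1
    obtain ⟨hfk, hgt⟩ := hk1
    have hka := Fin.succAbove_right_injective (hfk.symm.trans hfa.symm)
    exact ⟨⟨k, hka⟩, predAbove_apply_succ_le hf hx, hka ▸ hgt⟩
  · rintro ⟨⟨k, hk⟩, -, hgt⟩
    rcases path_eraseLeaf hx k with h | h
    · exact endpoint_eq_of_path_eq hf h (children_eq_empty_of_forall_ne hx)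
    refine endpoint_eq_of_path_eq hf (k := k + 1) ?_ (children_eq_empty_of_forall_ne hx)
    rw [path_succ, h, hk, descend_succAbove_eq_succ_iff hx]
    exact ⟨hfa.symm, hgt⟩

lemma graftPoint_eraseLeaf (he : endpoint f = p.succ) :
    graftPoint (eraseLeaf p f) p = p.predAbove (f p.succ) :=
  graftPoint_eq (isRecTree_eraseLeaf hx hf) ((endpoint_eq_succ_iff hx hf).1 he)

lemma isLeaf_succAbove_iff (hn : 1 < n) (v : Fin n) :
    IsLeaf (n + 1) f (p.succ.succAbove v) ↔
      IsLeaf n (eraseLeaf p f) v ∧ v ≠ p.predAbove (f p.succ) := by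
  simp only [IsLeaf, childCount_succAbove hx, Fin.val_succ_succAbove_eq_zero]
  by_cases hva : v = p.predAbove (f p.succ)
  · simp only [hva, if_true, ne_eq, not_true_eq_false, and_false, iff_false]
    split_ifs with h0
    · simpa using childCount_ne_zero_of_val_eq_zero (isRecTree_eraseLeaf hx hf) hn h0
    · exact not_false
  · simp [hva]

lemma leafCount_eraseLeaf (hn : 1 < n) :
    leafCount (n + 1) f + (if IsLeaf n (eraseLeaf p f) (p.predAbove (f p.succ)) then 1 else 0) =
      leafCount n (eraseLeaf p f) + 1 := by
  rw [leafCount_eq_sum, leafCount_eq_sum, Fin.sum_univ_succAbove _ p.succ,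
    if_pos (isLeaf_succ hx)]
  simp only [isLeaf_succAbove_iff hx hf hn]
  set a := p.predAbove (f p.succ)
  set L := IsLeaf n (eraseLeaf p f)
  have hsplit : ∀ v, (if L v then 1 else 0) =
      (if L v ∧ v ≠ a then 1 else 0) + if a = v then (if L a then 1 else 0) else 0 := by
    intro v
    by_cases hv : v = a <;> simp [hv, eq_comm]
  rw [sum_congr rfl fun v _ => hsplit v, sum_add_distrib, sum_ite_eq, if_pos (mem_univ a)]
  ring

end Deletion

def recTrees (n ℓ : ℕ) : Set (Fin n → Fin n) := {g | IsRecTree n g ∧ leafCount n g = ℓ}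

section Counting

variable [NeZero n]

lemma R_eq_ncard (ℓ i : ℕ) : R n ℓ i = {g ∈ recTrees n ℓ | (endpoint g : ℕ) = i}.ncard := by
  rw [R]
  congr 1
  ext g
  simp only [recTrees, Set.mem_ofPred_eq]
  exact ⟨fun ⟨hg, hℓ, he⟩ => ⟨⟨hg, hℓ⟩, (smallestPathEndsAt_iff hg).1 he⟩,
    fun ⟨⟨hg, hℓ⟩, he⟩ => ⟨hg, hℓ, (smallestPathEndsAt_iff hg).2 he⟩⟩

lemma sum_R_Icc (ℓ a b : ℕ) :
    ∑ i ∈ Icc a b, R n ℓ i = {g ∈ recTrees n ℓ | (endpoint g : ℕ) ∈ Icc a b}.ncard := by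
  simp only [R_eq_ncard]
  exact (Set.ncard_sep_mem_eq_sum _ _ _).symm

variable (hn : 1 < n)
include hn

lemma R_succ_eq_ncard (p : Fin n) (ℓ : ℕ) :
    R (n + 1) ℓ (p + 1) = {g : Fin n → Fin n | IsRecTree n g ∧
      leafCount n g + 1 = ℓ + if IsLeaf n g (graftPoint g p) then 1 else 0}.ncard := by
  have hS : ∀ f : Fin (n + 1) → Fin (n + 1), IsRecTree (n + 1) f →
      SmallestPathEndsAt (n + 1) f (p + 1) →
      (∀ w, f w ≠ p.succ) ∧ graftPoint (eraseLeaf p f) p = p.predAbove (f p.succ) := by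
    intro f hf he
    have he' : endpoint f = p.succ := Fin.ext ((smallestPathEndsAt_iff hf).1 he)
    have hx := apply_ne_of_children_eq_empty hf (he' ▸ children_endpoint hf) (Nat.succ_ne_zero p)
    exact ⟨hx, graftPoint_eraseLeaf hx hf he'⟩
  refine Set.ncard_congr (fun f _ => eraseLeaf p f) ?_ ?_ ?_
  · rintro f ⟨hf, rfl, he⟩
    obtain ⟨hx, ha⟩ := hS f hf he
    exact ⟨isRecTree_eraseLeaf hx hf, by rw [← leafCount_eraseLeaf hx hf hn, ha]⟩
  · rintro f₁ f₂ ⟨hf₁, -, he₁⟩ ⟨hf₂, -, he₂⟩ (h : eraseLeaf p f₁ = eraseLeaf p f₂)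
    obtain ⟨hx₁, ha₁⟩ := hS f₁ hf₁ he₁
    obtain ⟨hx₂, ha₂⟩ := hS f₂ hf₂ he₂
    rw [← addLeaf_eraseLeaf hx₁, ← addLeaf_eraseLeaf hx₂, ← ha₁, ← ha₂, h]
  · rintro g ⟨hg, hℓ⟩
    set a := graftPoint g p
    have hx : ∀ w, addLeaf p g a w ≠ p.succ := addLeaf_ne
    have hf := isRecTree_addLeaf hg (isGraftPoint_graftPoint hg p).2.1
    have hpa : p.predAbove (addLeaf p g a p.succ) = a := by
      rw [addLeaf_apply_same, Fin.predAbove_succ_succAbove]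
    refine ⟨addLeaf p g a, ⟨hf, ?_, ?_⟩, eraseLeaf_addLeaf⟩
    · have := leafCount_eraseLeaf hx hf hn
      rw [eraseLeaf_addLeaf, hpa] at this
      omega
    · rw [smallestPathEndsAt_iff hf, (endpoint_eq_succ_iff hx hf).2
        (by rw [eraseLeaf_addLeaf, hpa]; exact isGraftPoint_graftPoint hg p)]
      rfl

lemma ncard_leafCount_add_one_eq (ℓ : ℕ) (P : (Fin n → Fin n) → Prop) [DecidablePred P] :
    {g | IsRecTree n g ∧ leafCount n g + 1 = ℓ + if P g then 1 else 0}.ncard =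
      {g ∈ recTrees n (ℓ - 1) | ¬ P g}.ncard + {g ∈ recTrees n ℓ | P g}.ncard := by
  rw [← Set.ncard_union_eq ?_ (Set.toFinite _) (Set.toFinite _)]
  · congr 1
    ext g
    simp only [recTrees, Set.mem_ofPred_eq, Set.mem_union]
    by_cases hP : P g
    · simp only [hP, if_true, not_true_eq_false, and_false, and_true, false_or]
      constructor <;> rintro ⟨hg, h⟩ <;> exact ⟨hg, by omega⟩
    · simp only [hP, if_false, not_false_eq_true, and_true, and_false, or_false]
      constructor <;> rintro ⟨hg, h⟩ <;> have := leafCount_pos hg hn <;> exact ⟨hg, by omega⟩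
  · rw [Set.disjoint_left]
    rintro g ⟨-, hP⟩ ⟨-, hP'⟩
    exact hP hP'

theorem R_succ_of_ne_zero {p : Fin n} (hp : (p : ℕ) ≠ 0) (ℓ : ℕ) :
    R (n + 1) ℓ (p + 1) =
      (∑ i ∈ Icc ((p : ℕ) + 1) (n - 1), R n (ℓ - 1) i) + ∑ i ∈ Icc 1 (p : ℕ), R n ℓ i := by
  rw [R_succ_eq_ncard hn, ncard_leafCount_add_one_eq hn, sum_R_Icc, sum_R_Icc]
  have hleaf : ∀ ℓ', ∀ g ∈ recTrees n ℓ',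
      IsLeaf n g (graftPoint g p) ↔ (endpoint g : ℕ) ∈ Icc 1 (p : ℕ) := fun ℓ' g hg => by
    rw [isLeaf_graftPoint_iff hn hg.1 hp, Fin.le_def, mem_Icc]
    have := endpoint_ne_zero hg.1 hn
    omega
  congr 1 <;> refine congrArg _ (Set.sep_ext_iff.2 fun g hg => ?_)
  · rw [hleaf _ g hg, mem_Icc, mem_Icc]
    have := endpoint_ne_zero hg.1 hn
    have := (endpoint g).isLt
    omega
  · exact hleaf _ g hg

end Counting

section SwapRoot

variable {m : ℕ} {g : Fin (m + 2) → Fin (m + 2)}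

/-- The same undirected tree with the labels `0` and `1` exchanged, rooted again at `0`
(in a recursive tree `1` is always a child of `0`). -/
def swapRoot (g : Fin (m + 2) → Fin (m + 2)) (w : Fin (m + 2)) : Fin (m + 2) :=
  if (w : ℕ) ≤ 1 then 0 else Equiv.swap 0 1 (g w)

lemma val_swap_zero_one (y : Fin (m + 2)) :
    (Equiv.swap (0 : Fin (m + 2)) 1 y : ℕ) =
      if (y : ℕ) = 0 then 1 else if (y : ℕ) = 1 then 0 else (y : ℕ) := by
  rw [Equiv.swap_apply_def]
  simp only [Fin.ext_iff, Fin.val_zero, Fin.val_one]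
  split_ifs <;> simp

lemma val_swapRoot (w : Fin (m + 2)) :
    (swapRoot g w : ℕ) = if (w : ℕ) ≤ 1 then 0
      else if (g w : ℕ) = 0 then 1 else if (g w : ℕ) = 1 then 0 else (g w : ℕ) := by
  unfold swapRoot
  split_ifs <;> simp_all [val_swap_zero_one]

variable (hg : IsRecTree (m + 2) g)
include hg

lemma isRecTree_swapRoot : IsRecTree (m + 2) (swapRoot g) := by
  refine fun w => ⟨fun h => by simp [swapRoot, h, Fin.ext_iff], fun h => ?_⟩
  have := (hg w).2 h
  rw [val_swapRoot]
  split_ifs <;> omega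

lemma swapRoot_swapRoot : swapRoot (swapRoot g) = g := by
  funext w
  unfold swapRoot
  split_ifs with h1
  · have := (hg w).1
    have := (hg w).2
    apply Fin.ext
    rw [Fin.val_zero]
    omega
  · simp

lemma children_swapRoot_zero : children (swapRoot g) 0 = insert 1 (children g 1) := by
  ext u
  have h := (hg u).2
  simp only [mem_children, mem_insert, ne_eq, Fin.ext_iff, val_swapRoot, Fin.val_zero, Fin.val_one]
  split_ifs <;> (try simp only [and_false, and_true, false_iff]) <;> omega

lemma children_swapRoot_one : children (swapRoot g) 1 = (children g 0).erase 1 := by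
  ext u
  have h := (hg u).2
  simp only [mem_children, mem_erase, ne_eq, Fin.ext_iff, val_swapRoot, Fin.val_zero, Fin.val_one]
  split_ifs <;> (try simp only [and_false, and_true, false_iff]) <;> omega

lemma children_swapRoot_of_two_le {v : Fin (m + 2)} (hv : 2 ≤ (v : ℕ)) :
    children (swapRoot g) v = children g v := by
  ext u
  have h := (hg u).2
  simp only [mem_children, Fin.ext_iff, val_swapRoot]
  split_ifs <;> omega

lemma childCount_swapRoot_zero :
    childCount (m + 2) (swapRoot g) 0 = childCount (m + 2) g 1 + 1 := by
  rw [childCount_eq_card, children_swapRoot_zero hg, card_insert_of_notMem, childCount_eq_card]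
  exact fun h => lt_irrefl _ (lt_of_mem_children hg h)

lemma childCount_swapRoot_one :
    childCount (m + 2) (swapRoot g) 1 + 1 = childCount (m + 2) g 0 := by
  rw [childCount_eq_card, children_swapRoot_one hg, childCount_eq_card,
    card_erase_add_one (mem_children_of_val_eq_one hg (Fin.val_one m) (Fin.val_zero _))]

lemma isLeaf_swapRoot_iff (v : Fin (m + 2)) :
    IsLeaf (m + 2) (swapRoot g) v ↔ IsLeaf (m + 2) g (Equiv.swap 0 1 v) := by
  have h1 := childCount_swapRoot_one hg
  by_cases hv0 : v = 0
  · simp [hv0, IsLeaf, childCount_swapRoot_zero hg]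
  by_cases hv1 : v = 1
  · simp [hv1, IsLeaf]
    omega
  rw [Equiv.swap_apply_of_ne_of_ne hv0 hv1, IsLeaf, IsLeaf, childCount_eq_card,
    childCount_eq_card, children_swapRoot_of_two_le hg]
  simp only [Fin.ext_iff, Fin.val_zero, Fin.val_one] at hv0 hv1
  omega

lemma leafCount_swapRoot : leafCount (m + 2) (swapRoot g) = leafCount (m + 2) g := by
  rw [leafCount_eq_sum, leafCount_eq_sum]
  simp only [isLeaf_swapRoot_iff hg]
  exact Equiv.sum_comp (Equiv.swap 0 1) fun v => if IsLeaf (m + 2) g v then 1 else 0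

end SwapRoot

lemma ncard_recTrees_childCount_swap {m : ℕ} (ℓ : ℕ) (φ : Prop → Prop) :
    {g ∈ recTrees (m + 2) ℓ | φ (childCount (m + 2) g 0 = 1)}.ncard =
      {g ∈ recTrees (m + 2) ℓ | φ (childCount (m + 2) g 1 = 0)}.ncard := by
  refine Set.ncard_sep_eq_of_involution swapRoot (fun g ⟨hg, hℓ⟩ => ?_)
    (fun g hg => swapRoot_swapRoot hg.1) (fun g hg => ?_)
  · exact ⟨isRecTree_swapRoot hg, (leafCount_swapRoot hg).trans hℓ⟩
  · have := childCount_swapRoot_one hg.1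
    rw [show (childCount (m + 2) (swapRoot g) 1 = 0) = (childCount (m + 2) g 0 = 1) from
      propext (by omega)]

theorem R_succ_one (m ℓ : ℕ) :
    R (m + 2 + 1) ℓ 1 = (∑ i ∈ Icc 2 (m + 1), R (m + 2) (ℓ - 1) i) + R (m + 2) ℓ 1 := by
  have hn : 1 < m + 2 := by omega
  have hR := R_succ_eq_ncard hn 0 ℓ
  rw [Fin.val_zero, zero_add] at hR
  rw [hR, ncard_leafCount_add_one_eq hn, sum_R_Icc, R_eq_ncard]
  have hleaf : ∀ ℓ', ∀ g ∈ recTrees (m + 2) ℓ',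
      IsLeaf (m + 2) g (graftPoint g 0) ↔ childCount (m + 2) g 0 = 1 := fun ℓ' g hg => by
    rw [le_antisymm (isGraftPoint_graftPoint hg.1 0).2.1 (Fin.zero_le _), IsLeaf,
      if_pos (Fin.val_zero _)]
  have hswap := ncard_recTrees_childCount_swap (m := m) ℓ id
  simp only [id] at hswap
  rw [Set.sep_ext_iff.2 fun g hg => not_congr (hleaf _ g hg), Set.sep_ext_iff.2 (hleaf ℓ),
    ncard_recTrees_childCount_swap _ Not, hswap]
  congr 1 <;> refine congrArg _ (Set.sep_ext_iff.2 fun g hg => ?_)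
  · rw [← endpoint_eq_one_iff hg.1, mem_Icc]
    have := endpoint_ne_zero hg.1 hn
    have := (endpoint g).isLt
    omega
  · exact (endpoint_eq_one_iff hg.1).symm

/-- The recursion for the numbers `R(N, ℓ, x)`. -/
theorem R_recursion (N ℓ x : ℕ) (hN : 2 < N) (hx1 : 1 ≤ x) (hx2 : x ≤ N - 1) :
    R N ℓ x = (∑ i ∈ Finset.Icc (max x 2) (N - 2), R (N - 1) (ℓ - 1) i) +
      ∑ i ∈ Finset.Icc 1 (max (x - 1) 1), R (N - 1) ℓ i := by
  obtain ⟨m, rfl⟩ : ∃ m, N = m + 2 + 1 := ⟨N - 3, by omega⟩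
  rw [Nat.add_sub_cancel, show m + 2 + 1 - 2 = m + 1 by omega]
  rcases hx1.eq_or_lt with rfl | hx
  · rw [R_succ_one, Nat.sub_self, max_eq_right (by omega), max_eq_right zero_le_one, Icc_self,
      sum_singleton]
  · obtain ⟨p, rfl⟩ : ∃ p : Fin (m + 2), x = p + 1 := ⟨⟨x - 1, by omega⟩, by simp; omega⟩
    rw [R_succ_of_ne_zero (by omega) (by omega), max_eq_left (by omega), max_eq_left (by omega),
      Nat.add_sub_cancel, show m + 2 - 1 = m + 1 by omega]
end

section
/- For every N > 1 and every x with 1 ≤ x ≤ N−1, the number of recursive trees on N vertices whose smallest rooted path ends at x is exactly (N−2)!. -/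
open Finset

/-- Allowed parent values for vertex `v` (vertices `0` and `x` map to themselves). -/
def pSet (N x : ℕ) (v : Fin N) : Finset (Fin N) :=
  if (v : ℕ) = 0 ∨ (v : ℕ) = x then {v}
  else Finset.univ.filter fun u : Fin N => (u : ℕ) < (v : ℕ) ∧ (u : ℕ) ≠ x

/-- The weight function for the product count. -/
def tw (x v : ℕ) : ℕ := if v = 0 ∨ v = x then 1 else if v < x then v else v - 1

lemma card_pSet (N x : ℕ) (v : Fin N) : (pSet N x v).card = tw x (v : ℕ) := by
  unfold pSet tw
  by_cases h : (v : ℕ) = 0 ∨ (v : ℕ) = x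
  · simp [h]
  · rw [if_neg h, if_neg h]
    push_neg at h
    by_cases hvx : (v : ℕ) < x
    · rw [if_pos hvx]
      have : (Finset.univ.filter fun u : Fin N => (u : ℕ) < (v : ℕ) ∧ (u : ℕ) ≠ x)
          = Finset.Iio v := by
        ext u
        simp only [mem_filter, mem_univ, true_and, mem_Iio, Fin.lt_def]
        omega
      rw [this, Fin.card_Iio]
    · rw [if_neg hvx]
      have hxv : x < (v : ℕ) := by omega
      have hxN : x < N := lt_trans hxv v.isLt
      have : (Finset.univ.filter fun u : Fin N => (u : ℕ) < (v : ℕ) ∧ (u : ℕ) ≠ x)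
          = (Finset.Iio v).erase ⟨x, hxN⟩ := by
        ext u
        simp only [mem_filter, mem_univ, true_and, mem_erase, mem_Iio, Fin.lt_def,
          ne_eq, Fin.ext_iff, Fin.val_mk]
        omega
      rw [this, Finset.card_erase_of_mem (by simp [Finset.mem_Iio, Fin.lt_def, hxv]),
        Fin.card_Iio]

lemma prod_tw_small (x : ℕ) (hx : 1 ≤ x) : ∀ n, 1 ≤ n → n ≤ x →
    ∏ v ∈ Finset.range n, tw x v = Nat.factorial (n - 1) := by
  intro n
  induction n with
  | zero => omega
  | succ n ih =>
    intro _ hnx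
    rcases Nat.eq_or_lt_of_le (Nat.one_le_iff_ne_zero.mpr (by omega) : 1 ≤ n + 1) with h1 | h1
    · simp [← h1, tw]
    · have hn : 1 ≤ n := by omega
      rw [Finset.prod_range_succ, ih hn (by omega)]
      have : tw x n = n := by unfold tw; rw [if_neg (by omega), if_pos (by omega)]
      rw [this, Nat.succ_sub_one]
      rw [mul_comm]
      exact Nat.mul_factorial_pred (by omega)

lemma prod_tw (x : ℕ) (hx : 1 ≤ x) : ∀ N, x + 1 ≤ N →
    ∏ v ∈ Finset.range N, tw x v = Nat.factorial (N - 2) := by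
  intro N
  induction N with
  | zero => omega
  | succ N ih =>
    intro hN
    rcases Nat.eq_or_lt_of_le hN with h1 | h1
    · -- N = x
      have hNx : N = x := by omega
      rw [Finset.prod_range_succ, prod_tw_small x hx N (by omega) (by omega)]
      have : tw x N = 1 := by unfold tw; rw [if_pos (Or.inr hNx)]
      rw [this, mul_one, show N + 1 - 2 = N - 1 from by omega]
    · have hN' : x + 1 ≤ N := by omega
      rw [Finset.prod_range_succ, ih hN']
      have : tw x N = N - 1 := by unfold tw; rw [if_neg (by omega), if_neg (by omega)]
      rw [this]
      have h2 : N + 1 - 2 = N - 1 := by omega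
      rw [h2, mul_comm]
      have : N - 1 - 1 = N - 2 := by omega
      rw [← this]
      exact Nat.mul_factorial_pred (by omega)

/-- paths have strictly increasing labels -/
lemma path_mono_s17 {N : ℕ} {f : Fin N → Fin N} (hf : IsRecTree N f) {m : ℕ} {c : ℕ → Fin N}
    (hstep : ∀ i, i < m → (c (i + 1) : ℕ) ≠ 0 ∧ f (c (i + 1)) = c i ∧
      ∀ w : Fin N, (w : ℕ) ≠ 0 → f w = c i → c (i + 1) ≤ w) :
    ∀ i j, i < j → j ≤ m → (c i : ℕ) < (c j : ℕ) := by
  intro i j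
  induction j with
  | zero => omega
  | succ j ih =>
    intro hij hjm
    have hj : j < m := by omega
    obtain ⟨h0, hpar, _⟩ := hstep j hj
    have hlt : (c j : ℕ) < (c (j + 1) : ℕ) := by
      have := (hf (c (j + 1))).2 h0
      rw [hpar] at this
      exact this
    rcases Nat.lt_or_ge i j with h | h
    · exact lt_trans (ih h (by omega)) hlt
    · have : i = j := by omega
      rw [this]; exact hlt

/-- key injectivity lemma: two recursive trees that agree off `x` and whose smallest
paths both end at `x` have the same parent of `x`. -/
lemma parent_eq {N x : ℕ} (hx : 0 < x) (hxN : x < N) {f f' : Fin N → Fin N}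
    (hf : IsRecTree N f) (hf' : IsRecTree N f')
    (hagree : ∀ v : Fin N, (v : ℕ) ≠ x → f v = f' v)
    {m m' : ℕ} {c c' : ℕ → Fin N}
    (hc0 : (c 0 : ℕ) = 0) (hcm : (c m : ℕ) = x)
    (hstep : ∀ i, i < m → (c (i + 1) : ℕ) ≠ 0 ∧ f (c (i + 1)) = c i ∧
      ∀ w : Fin N, (w : ℕ) ≠ 0 → f w = c i → c (i + 1) ≤ w)
    (hc0' : (c' 0 : ℕ) = 0) (hcm' : (c' m' : ℕ) = x)
    (hstep' : ∀ i, i < m' → (c' (i + 1) : ℕ) ≠ 0 ∧ f' (c' (i + 1)) = c' i ∧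
      ∀ w : Fin N, (w : ℕ) ≠ 0 → f' w = c' i → c' (i + 1) ≤ w)
    (hmm : m ≤ m') :
    f ⟨x, hxN⟩ = f' ⟨x, hxN⟩ := by
  have mono := path_mono_s17 hf hstep
  have mono' := path_mono_s17 hf' hstep'
  have hm1 : 1 ≤ m := by
    by_contra h
    have : m = 0 := by omega
    rw [this] at hcm
    omega
  -- the two paths agree strictly before index m
  have key : ∀ i, i < m → c i = c' i := by
    intro i
    induction i with
    | zero => intro _; apply Fin.ext; rw [hc0, hc0']
    | succ i ih =>
      intro him
      have hi := ih (by omega)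
      obtain ⟨h0, hpar, hmin⟩ := hstep i (by omega)
      obtain ⟨h0', hpar', hmin'⟩ := hstep' i (by omega)
      have hne : (c (i + 1) : ℕ) ≠ x := by
        have := mono (i + 1) m him (le_refl m)
        omega
      have hne' : (c' (i + 1) : ℕ) ≠ x := by
        have := mono' (i + 1) m' (by omega) (le_refl m')
        omega
      have h1 : c' (i + 1) ≤ c (i + 1) := by
        apply hmin' (c (i + 1)) h0
        rw [← hagree _ hne, hpar, hi]
      have h2 : c (i + 1) ≤ c' (i + 1) := by
        apply hmin (c' (i + 1)) h0'
        rw [hagree _ hne', hpar', hi]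
      exact le_antisymm h2 h1
  have hXm : c m = ⟨x, hxN⟩ := Fin.ext hcm
  have hXm' : c' m' = ⟨x, hxN⟩ := Fin.ext hcm'
  have hfx : f ⟨x, hxN⟩ = c (m - 1) := by
    obtain ⟨_, hpar, _⟩ := hstep (m - 1) (by omega)
    rw [show m - 1 + 1 = m from by omega, hXm] at hpar
    exact hpar
  have hm1' : 1 ≤ m' := le_trans hm1 hmm
  have hfx' : f' ⟨x, hxN⟩ = c' (m' - 1) := by
    obtain ⟨_, hpar, _⟩ := hstep' (m' - 1) (by omega)
    rw [show m' - 1 + 1 = m' from by omega, hXm'] at hpar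
    exact hpar
  rcases Nat.eq_or_lt_of_le hmm with heq | hlt
  · rw [hfx, hfx', ← heq, key (m - 1) (by omega)]
  · -- m < m' : derive a contradiction
    exfalso
    obtain ⟨h0', hpar', _⟩ := hstep' (m - 1) (by omega)
    rw [show m - 1 + 1 = m from by omega] at hpar' h0'
    have hkey : c' (m - 1) = c (m - 1) := (key (m - 1) (by omega)).symm
    have hcmne : (c' m : ℕ) ≠ x := by
      have := mono' m m' hlt (le_refl m')
      omega
    -- c' m is also an f-child of c (m-1)
    have hfc : f (c' m) = c (m - 1) := by
      rw [hagree _ hcmne, hpar', hkey]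
    obtain ⟨_, _, hmin⟩ := hstep (m - 1) (by omega)
    have hle : c m ≤ c' m := by
      rw [show m - 1 + 1 = m from by omega] at hmin
      exact hmin (c' m) h0' hfc
    have hxlt : x < (c' m : ℕ) := by
      have : (c m : ℕ) ≤ (c' m : ℕ) := hle
      omega
    -- but c' m ≤ c' (m'-1) = f' x < x
    have hch : (c' m : ℕ) ≤ (c' (m' - 1) : ℕ) := by
      rcases Nat.eq_or_lt_of_le (show m ≤ m' - 1 from by omega) with h | h
      · rw [h]
      · exact le_of_lt (mono' m (m' - 1) h (by omega))
    have hflt : (f' ⟨x, hxN⟩ : ℕ) < x := (hf' ⟨x, hxN⟩).2 (by simp; omega)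
    rw [hfx'] at hflt
    omega

/-- children of `v` in `g`, excluding vertices `0` and `x`. -/
def ch (N x : ℕ) (g : Fin N → Fin N) (v : Fin N) : Finset (Fin N) :=
  Finset.univ.filter fun u : Fin N => (u : ℕ) ≠ 0 ∧ (u : ℕ) ≠ x ∧ g u = v

lemma mem_ch {N x : ℕ} {g : Fin N → Fin N} {v u : Fin N} :
    u ∈ ch N x g v ↔ (u : ℕ) ≠ 0 ∧ (u : ℕ) ≠ x ∧ g u = v := by
  simp [ch]

/-- the greedy smallest path in `g`, avoiding vertex `x`. -/
def gp (N x : ℕ) (hN : 0 < N) (g : Fin N → Fin N) : ℕ → Fin N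
  | 0 => ⟨0, hN⟩
  | i + 1 =>
    if h : (ch N x g (gp N x hN g i)).Nonempty then (ch N x g (gp N x hN g i)).min' h
    else gp N x hN g i

lemma surj_aux {N x : ℕ} (hN : 0 < N) (hx : 0 < x) (hxN : x < N) (g : Fin N → Fin N)
    (hg0 : ∀ v : Fin N, (v : ℕ) = 0 → g v = v)
    (hglt : ∀ v : Fin N, (v : ℕ) ≠ 0 → (v : ℕ) ≠ x → (g v : ℕ) < (v : ℕ) ∧ (g v : ℕ) ≠ x)
    (hgx : g ⟨x, hxN⟩ = ⟨x, hxN⟩) :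
    ∃ f : Fin N → Fin N, (IsRecTree N f ∧ SmallestPathEndsAt N f x) ∧
      Function.update f ⟨x, hxN⟩ ⟨x, hxN⟩ = g := by
  set d : ℕ → Fin N := gp N x hN g with hd
  have hd0 : (d 0 : ℕ) = 0 := rfl
  have hdsucc : ∀ (i : ℕ) (h : (ch N x g (d i)).Nonempty),
      d (i + 1) = (ch N x g (d i)).min' h := by
    intro i h
    show gp N x hN g (i + 1) = _
    rw [gp, dif_pos h]
  have hstep_lt : ∀ i, (ch N x g (d i)).Nonempty → (d i : ℕ) < (d (i + 1) : ℕ) := by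
    intro i h
    rw [hdsucc i h]
    have hmem := Finset.min'_mem (ch N x g (d i)) h
    rw [mem_ch] at hmem
    obtain ⟨h1, h2, h3⟩ := hmem
    have := (hglt _ h1 h2).1
    rw [h3] at this
    exact this
  have hgrow : ∀ n, (∀ i, i < n → (ch N x g (d i)).Nonempty) → n ≤ (d n : ℕ) := by
    intro n
    induction n with
    | zero => intro _; omega
    | succ n ih =>
      intro h
      have h1 := ih (fun i hi => h i (by omega))
      have h2 := hstep_lt n (h n (by omega))
      omega
  have hex : ∃ i, ¬(ch N x g (d i)).Nonempty := by
    by_contra hcon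
    push_neg at hcon
    have h1 := hgrow N (fun i _ => hcon i)
    have h2 := (d N).isLt
    omega
  set K := Nat.find hex with hK
  have hKspec : ¬(ch N x g (d K)).Nonempty := Nat.find_spec hex
  have hKmin : ∀ i, i < K → (ch N x g (d i)).Nonempty := by
    intro i hi
    exact not_not.mp (Nat.find_min hex hi)
  have hmono : ∀ i j, i < j → j ≤ K → (d i : ℕ) < (d j : ℕ) := by
    intro i j
    induction j with
    | zero => omega
    | succ j ih =>
      intro hij hjK
      have hlt := hstep_lt j (hKmin j (by omega))
      rcases Nat.lt_or_ge i j with h | h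
      · exact lt_trans (ih h (by omega)) hlt
      · have : i = j := by omega
        rw [this]; exact hlt
  set j := Nat.findGreatest (fun i => (d i : ℕ) < x) K with hjdef
  have hjlt : (d j : ℕ) < x :=
    Nat.findGreatest_spec (P := fun i => (d i : ℕ) < x) (Nat.zero_le K)
      (show (d 0 : ℕ) < x by rw [hd0]; exact hx)
  have hjK : j ≤ K := Nat.findGreatest_le K
  have hjnext : j < K → x < (d (j + 1) : ℕ) := by
    intro h
    have hne := hKmin j h
    have h1 : ¬((d (j + 1) : ℕ) < x) :=
      Nat.findGreatest_is_greatest (P := fun i => (d i : ℕ) < x) (n := K) (k := j + 1)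
        (by omega) (by omega)
    have hmem := Finset.min'_mem (ch N x g (d j)) hne
    rw [mem_ch] at hmem
    rw [← hdsucc j hne] at hmem
    obtain ⟨-, h2, -⟩ := hmem
    omega
  set X : Fin N := ⟨x, hxN⟩ with hX
  have hXval : (X : ℕ) = x := rfl
  set f : Fin N → Fin N := Function.update g X (d j) with hf
  have hfX : f X = d j := Function.update_self X (d j) g
  have hfv : ∀ v : Fin N, v ≠ X → f v = g v := fun v hv => Function.update_of_ne hv (d j) g
  have hvne : ∀ v : Fin N, (v : ℕ) ≠ x → v ≠ X := by
    intro v hv hc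
    apply hv
    rw [hc]
  have hdne : ∀ i, (ch N x g (d i)).Nonempty → (d (i + 1) : ℕ) ≠ 0 ∧ (d (i + 1) : ℕ) ≠ x ∧
      g (d (i + 1)) = d i := by
    intro i h
    have hmem := Finset.min'_mem (ch N x g (d i)) h
    rw [mem_ch] at hmem
    rw [← hdsucc i h] at hmem
    exact hmem
  refine ⟨f, ⟨⟨?_, ?_⟩, ?_⟩⟩
  · -- IsRecTree
    intro v
    constructor
    · intro hv0
      have hvX : v ≠ X := by
        intro hc
        rw [hc] at hv0
        omega
      rw [hfv v hvX]
      exact hg0 v hv0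
    · intro hv0
      by_cases hvX : v = X
      · rw [hvX, hfX, hXval]
        exact hjlt
      · rw [hfv v hvX]
        exact (hglt v hv0 (fun hc => hvX (Fin.ext hc))).1
  · -- SmallestPathEndsAt
    refine ⟨j + 1, fun i => if i ≤ j then d i else X, ?_, ?_, ?_, ?_⟩
    · show ((if 0 ≤ j then d 0 else X : Fin N) : ℕ) = 0
      rw [if_pos (Nat.zero_le j)]
      exact hd0
    · show ((if j + 1 ≤ j then d (j + 1) else X : Fin N) : ℕ) = x
      rw [if_neg (by omega)]
    · intro i hi
      beta_reduce
      have hij : i ≤ j := by omega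
      rw [if_pos hij]
      rcases Nat.lt_or_ge i j with hlt | hge
      · -- i < j : step along d
        rw [if_pos (by omega : i + 1 ≤ j)]
        have hne := hKmin i (by omega)
        obtain ⟨h1, h2, h3⟩ := hdne i hne
        refine ⟨h1, ?_, ?_⟩
        · rw [hfv _ (hvne _ h2)]
          exact h3
        · intro w hw0 hfw
          by_cases hwX : w = X
          · exfalso
            rw [hwX, hfX] at hfw
            have := hmono i j hlt hjK
            rw [hfw] at this
            omega
          · rw [hfv w hwX] at hfw
            have hwmem : w ∈ ch N x g (d i) := by
              rw [mem_ch]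
              exact ⟨hw0, fun hc => hwX (Fin.ext hc), hfw⟩
            rw [hdsucc i hne]
            exact Finset.min'_le _ w hwmem
      · -- i = j : step to X
        have hij' : i = j := by omega
        rw [hij']
        rw [if_neg (by omega : ¬ j + 1 ≤ j)]
        refine ⟨by rw [hXval]; omega, hfX, ?_⟩
        intro w hw0 hfw
        by_cases hwX : w = X
        · rw [hwX]
        · rw [hfv w hwX] at hfw
          have hwmem : w ∈ ch N x g (d j) := by
            rw [mem_ch]
            exact ⟨hw0, fun hc => hwX (Fin.ext hc), hfw⟩
          have hiK : j < K := by
            rcases Nat.lt_or_ge j K with h | h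
            · exact h
            · exfalso
              have hjK' : j = K := by omega
              rw [hjK'] at hwmem
              exact hKspec ⟨w, hwmem⟩
          have h1 := hjnext hiK
          have h2 : d (j + 1) ≤ w := by
            rw [hdsucc j (hKmin j hiK)]
            exact Finset.min'_le _ w hwmem
          rw [Fin.le_def] at h2 ⊢
          rw [hXval]
          omega
    · -- childless at X
      beta_reduce
      rw [if_neg (by omega : ¬ j + 1 ≤ j)]
      unfold childCount
      rw [Finset.card_eq_zero, Finset.filter_eq_empty_iff]
      intro u _
      rintro ⟨hu0, hfu⟩
      by_cases huX : u = X
      · rw [huX, hfX] at hfu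
        have hfu' : (d j : ℕ) = x := by rw [hfu, hXval]
        omega
      · rw [hfv u huX] at hfu
        have := (hglt u hu0 (fun hc => huX (Fin.ext hc))).2
        rw [hfu, hXval] at this
        exact this rfl
  · -- update recovers g
    funext v
    by_cases hvX : v = X
    · rw [hvX, Function.update_self, hgx]
    · rw [Function.update_of_ne hvX, hfv v hvX]

/-- For `N > 1` and `1 ≤ x ≤ N-1`, the number of recursive trees on `N` vertices whose
smallest rooted path ends at `x` is `(N-2)!`. -/
theorem count_trees_smallest_path (N x : ℕ) (hN : 1 < N) (hx1 : 1 ≤ x) (hx2 : x ≤ N - 1) :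
    Set.ncard { f : Fin N → Fin N | IsRecTree N f ∧ SmallestPathEndsAt N f x } =
      Nat.factorial (N - 2) := by
  have hxN : x < N := by omega
  set X : Fin N := ⟨x, hxN⟩ with hX
  set A := {f : Fin N → Fin N | IsRecTree N f ∧ SmallestPathEndsAt N f x} with hA
  set B := {g : Fin N → Fin N | ∀ v, g v ∈ pSet N x v} with hB
  set Φ : (Fin N → Fin N) → (Fin N → Fin N) := fun f => Function.update f X X with hPhi
  have hbij : Set.BijOn Φ A B := by
    refine ⟨?_, ?_, ?_⟩
    · -- MapsTo
      rintro f ⟨hrec, m, c, hc0, hcm, hstep, hleaf⟩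
      have hchild : ∀ u : Fin N, (u : ℕ) ≠ 0 → f u ≠ X := by
        intro u hu0 hc
        have hcmX : c m = X := Fin.ext (by rw [hcm])
        rw [hcmX] at hleaf
        unfold childCount at hleaf
        rw [Finset.card_eq_zero, Finset.filter_eq_empty_iff] at hleaf
        exact hleaf (Finset.mem_univ u) ⟨hu0, hc⟩
      intro v
      show Function.update f X X v ∈ pSet N x v
      by_cases hvX : v = X
      · rw [hvX, Function.update_self]
        unfold pSet
        rw [if_pos (Or.inr rfl), Finset.mem_singleton]
      · rw [Function.update_of_ne hvX]
        unfold pSet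
        by_cases hv0 : (v : ℕ) = 0
        · rw [if_pos (Or.inl hv0), Finset.mem_singleton]
          exact (hrec v).1 hv0
        · have hvx : (v : ℕ) ≠ x := fun hc => hvX (Fin.ext hc)
          rw [if_neg (by push_neg; exact ⟨hv0, hvx⟩)]
          simp only [Finset.mem_filter, Finset.mem_univ, true_and]
          refine ⟨(hrec v).2 hv0, fun hc => hchild v hv0 (Fin.ext hc)⟩
    · -- InjOn
      rintro f ⟨hrec, m, c, hc0, hcm, hstep, -⟩ f' ⟨hrec', m', c', hc0', hcm', hstep', -⟩ heq
      have hagree : ∀ v : Fin N, (v : ℕ) ≠ x → f v = f' v := by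
        intro v hv
        have hvX : v ≠ X := fun hc => hv (by rw [hc])
        have h := congrFun heq v
        simp only [hPhi] at h
        rwa [Function.update_of_ne hvX, Function.update_of_ne hvX] at h
      have hfx : f X = f' X := by
        rcases le_total m m' with h | h
        · exact parent_eq (by omega) hxN hrec hrec' hagree hc0 hcm hstep hc0' hcm'
            hstep' h
        · exact (parent_eq (by omega) hxN hrec' hrec (fun v hv => (hagree v hv).symm)
            hc0' hcm' hstep' hc0 hcm hstep h).symm
      funext v
      by_cases hvX : v = X
      · rw [hvX]; exact hfx
      · exact hagree v (fun hc => hvX (Fin.ext hc))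
    · -- SurjOn
      intro g hg
      have hg' : ∀ v, g v ∈ pSet N x v := hg
      have hg0 : ∀ v : Fin N, (v : ℕ) = 0 → g v = v := by
        intro v hv
        have h := hg' v
        unfold pSet at h
        rwa [if_pos (Or.inl hv), Finset.mem_singleton] at h
      have hgx : g X = X := by
        have h := hg' X
        unfold pSet at h
        rwa [if_pos (Or.inr rfl), Finset.mem_singleton] at h
      have hglt : ∀ v : Fin N, (v : ℕ) ≠ 0 → (v : ℕ) ≠ x →
          (g v : ℕ) < (v : ℕ) ∧ (g v : ℕ) ≠ x := by
        intro v hv0 hvx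
        have h := hg' v
        unfold pSet at h
        rw [if_neg (by push_neg; exact ⟨hv0, hvx⟩)] at h
        simpa using h
      obtain ⟨f, hfA, hfg⟩ := surj_aux (by omega) (by omega) hxN g hg0 hglt hgx
      exact ⟨f, hfA, hfg⟩
  have h1 : A.ncard = B.ncard := by
    rw [← hbij.image_eq]
    exact (Set.ncard_image_of_injOn hbij.injOn).symm
  have h2 : B = ↑(Fintype.piFinset (pSet N x)) := by
    ext g
    simp [hB, Fintype.mem_piFinset]
  rw [h1, h2, Set.ncard_coe_finset, Fintype.card_piFinset]
  rw [Finset.prod_congr rfl (fun v _ => card_pSet N x v)]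
  rw [Fin.prod_univ_eq_prod_range (fun v => tw x v) N]
  exact prod_tw x hx1 N (by omega)
end
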